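/- arXiv:2201.03220 — 2 statements merged into one kernel-verified Lean document; each statement's English description precedes it below -/
import Mathlib

section
/- Correctness of branching on a vertex: for any graph G = (V, E) and any vertex v, the maximum induced matching size of G equals the maximum over the following alternatives: (a) the maximum induced matching size of G[V \ {v}], and (b) for each neighbour w of v, one plus the maximum induced matching size of G[V \ (N[v] ∪ N[w])]. -/
open SimpleGraph

/-- A set `M` of edges of `G` is an induced matching: all elements are edges of `G`,
and any two distinct edges of `M` neither share an endpoint nor have adjacent endpoints;
equivalently every vertex of the subgraph induced by the endpoints of `M` has degree 1. -/
def IsInducedMatching {V : Type*} (G : SimpleGraph V) (M : Set (Sym2 V)) : Prop :=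
  M ⊆ G.edgeSet ∧
    ∀ e ∈ M, ∀ f ∈ M, e ≠ f → ∀ u ∈ e, ∀ v ∈ f, u ≠ v ∧ ¬ G.Adj u v

/-- The maximum cardinality of an induced matching of `G`. -/
noncomputable def maxIM {V : Type*} (G : SimpleGraph V) : ℕ :=
  sSup {k | ∃ M : Finset (Sym2 V), IsInducedMatching G (↑M) ∧ M.card = k}

/-! Take a maximum induced matching `M`. If `v` is unmatched, `M` is an induced matching of
`G - v`. If `v` is matched to `w`, inducedness forces every other edge of `M` to avoid
`N[v] ∪ N[w]`, so `M` minus `vw` lives in `G[V \ (N[v] ∪ N[w])]`. Conversely, `vw` can be added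
to any induced matching that avoids `N[v] ∪ N[w]`. -/

section

variable {V W : Type*} {G : SimpleGraph V}

namespace IsInducedMatching

theorem mono {M N : Set (Sym2 V)} (hM : IsInducedMatching G M) (hNM : N ⊆ M) :
    IsInducedMatching G N :=
  ⟨hNM.trans hM.1, fun e he f hf => hM.2 e (hNM he) f (hNM hf)⟩

theorem insert_of_subset_sym2 {M : Set (Sym2 V)} {v w : V} (hM : IsInducedMatching G M)
    (hvw : G.Adj v w)
    (hMs : M ⊆ (insert v (G.neighborSet v) ∪ insert w (G.neighborSet w))ᶜ.sym2) :
    IsInducedMatching G (insert s(v, w) M) := by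
  have away : ∀ e ∈ M, ∀ x ∈ e, ∀ y ∈ s(v, w), x ≠ y ∧ ¬G.Adj x y := by
    intro e he x hx y hy
    have := Set.mem_sym2_iff_subset.mp (hMs he) hx
    simp only [Set.mem_compl_iff, Set.mem_union, Set.mem_insert_iff, mem_neighborSet,
      not_or] at this
    rcases Sym2.mem_iff.mp hy with rfl | rfl
    · exact ⟨this.1.1, fun h => this.1.2 h.symm⟩
    · exact ⟨this.2.1, fun h => this.2.2 h.symm⟩
  refine ⟨Set.insert_subset hvw hM.1, ?_⟩
  rintro e (rfl | he) f (rfl | hf) hef u hu x hx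
  · exact absurd rfl hef
  · exact (away f hf x hx u hu).imp Ne.symm fun h h' => h h'.symm
  · exact away e he u hu x hx
  · exact hM.2 e he f hf hef u hu x hx

theorem diff_subset_sym2 {M : Set (Sym2 V)} {v w : V} (hM : IsInducedMatching G M)
    (hvw : s(v, w) ∈ M) :
    M \ {s(v, w)} ⊆ (insert v (G.neighborSet v) ∪ insert w (G.neighborSet w))ᶜ.sym2 := by
  rintro e ⟨he, hne⟩
  rw [Set.mem_sym2_iff_subset]
  intro x hx
  have hxv := hM.2 e he _ hvw hne x hx v (Sym2.mem_mk_left v w)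
  have hxw := hM.2 e he _ hvw hne x hx w (Sym2.mem_mk_right v w)
  simp only [Set.mem_compl_iff, Set.mem_union, Set.mem_insert_iff, mem_neighborSet, not_or]
  exact ⟨⟨hxv.1, fun h => hxv.2 h.symm⟩, hxw.1, fun h => hxw.2 h.symm⟩

end IsInducedMatching

theorem isInducedMatching_comap_iff {f : W → V} (hf : Function.Injective f)
    (M : Set (Sym2 W)) :
    IsInducedMatching (G.comap f) M ↔ IsInducedMatching G (Sym2.map f '' M) := by
  have hedges : (G.comap f).edgeSet = Sym2.map f ⁻¹' G.edgeSet := by ext ⟨a, b⟩; rfl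
  simp only [IsInducedMatching, Set.image_subset_iff, Set.forall_mem_image,
    (Sym2.map.injective hf).ne_iff, Sym2.mem_map, forall_exists_index, and_imp,
    forall_apply_eq_imp_iff₂, hf.ne_iff, hedges, comap_adj]

theorem isInducedMatching_empty : IsInducedMatching G ∅ :=
  ⟨Set.empty_subset _, by simp⟩

theorem Set.sym2_eq_range_map_val (s : Set V) :
    s.sym2 = Set.range (Sym2.map ((↑) : s → V)) := by
  rw [← Set.image_univ, ← Set.sym2_univ, ← Set.sym2_image, Set.image_univ, Subtype.range_coe]

section maxIM

variable [Finite V]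

theorem bddAbove_card_isInducedMatching (G : SimpleGraph V) :
    BddAbove {k | ∃ M : Finset (Sym2 V), IsInducedMatching G (↑M) ∧ M.card = k} := by
  have := Fintype.ofFinite (Sym2 V)
  refine ⟨Fintype.card (Sym2 V), ?_⟩
  rintro k ⟨M, -, rfl⟩
  exact M.card_le_univ

theorem exists_isInducedMatching_card_eq_maxIM (G : SimpleGraph V) :
    ∃ M : Finset (Sym2 V), IsInducedMatching G ↑M ∧ M.card = maxIM G := by
  refine Nat.sSup_mem ?_ (bddAbove_card_isInducedMatching G)
  exact ⟨0, ∅, by simpa using isInducedMatching_empty, rfl⟩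

theorem IsInducedMatching.card_le_maxIM {M : Finset (Sym2 V)}
    (hM : IsInducedMatching G ↑M) : M.card ≤ maxIM G :=
  le_csSup (bddAbove_card_isInducedMatching G) ⟨M, hM, rfl⟩

theorem IsInducedMatching.card_le_maxIM_induce {s : Set V} {M : Finset (Sym2 V)}
    (hM : IsInducedMatching G ↑M) (hMs : ↑M ⊆ s.sym2) : M.card ≤ maxIM (G.induce s) := by
  classical
  rw [Set.sym2_eq_range_map_val, ← Set.image_univ] at hMs
  obtain ⟨N, -, rfl⟩ := Finset.subset_set_image_iff.mp hMs
  rw [Finset.card_image_of_injective _ (Sym2.map.injective Subtype.val_injective)]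
  rw [Finset.coe_image, ← isInducedMatching_comap_iff Subtype.val_injective] at hM
  exact hM.card_le_maxIM

theorem exists_isInducedMatching_card_eq_maxIM_induce (G : SimpleGraph V) (s : Set V) :
    ∃ M : Finset (Sym2 V), IsInducedMatching G ↑M ∧ ↑M ⊆ s.sym2 ∧
      M.card = maxIM (G.induce s) := by
  classical
  obtain ⟨N, hN, hcard⟩ := exists_isInducedMatching_card_eq_maxIM (G.induce s)
  refine ⟨N.image (Sym2.map (↑)), ?_, ?_, ?_⟩
  · rw [Finset.coe_image]
    exact (isInducedMatching_comap_iff Subtype.val_injective _).mp hN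
  · rw [Finset.coe_image, Set.sym2_eq_range_map_val]
    exact Set.image_subset_range _ _
  · rwa [Finset.card_image_of_injective _ (Sym2.map.injective Subtype.val_injective)]

theorem maxIM_induce_le (G : SimpleGraph V) (s : Set V) : maxIM (G.induce s) ≤ maxIM G := by
  obtain ⟨M, hM, -, hcard⟩ := exists_isInducedMatching_card_eq_maxIM_induce G s
  exact hcard ▸ hM.card_le_maxIM

theorem IsInducedMatching.card_le_one_add_maxIM_induce [DecidableEq V] {M : Finset (Sym2 V)}
    {v w : V} (hM : IsInducedMatching G ↑M) (hvw : s(v, w) ∈ M) :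
    M.card ≤ 1 + maxIM (G.induce
      (insert v (G.neighborSet v) ∪ insert w (G.neighborSet w))ᶜ) := by
  have hrest := (hM.mono (Finset.coe_subset.mpr (M.erase_subset _))).card_le_maxIM_induce
    ((M.coe_erase _).subset.trans (hM.diff_subset_sym2 hvw))
  have := Finset.card_erase_add_one hvw
  omega

theorem one_add_maxIM_induce_le {v w : V} (hvw : G.Adj v w) :
    1 + maxIM (G.induce (insert v (G.neighborSet v) ∪ insert w (G.neighborSet w))ᶜ) ≤
      maxIM G := by
  classical
  obtain ⟨M, hM, hMs, hcard⟩ := exists_isInducedMatching_card_eq_maxIM_induce G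
    (insert v (G.neighborSet v) ∪ insert w (G.neighborSet w))ᶜ
  have hvwM : s(v, w) ∉ M := fun h => by
    simpa using Set.mem_sym2_iff_subset.mp (hMs h) (Sym2.mem_mk_left v w)
  calc 1 + maxIM _ = (insert s(v, w) M).card := by
        rw [Finset.card_insert_of_notMem hvwM, hcard, add_comm]
    _ ≤ maxIM G := IsInducedMatching.card_le_maxIM <| by
        rw [Finset.coe_insert]
        exact hM.insert_of_subset_sym2 hvw hMs

end maxIM

end

/-- correctness of branching on a vertex: the maximum induced matching
size of `G` is the maximum of (a) that of `G[V \ {v}]` and (b), over all neighbours `w`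
of `v`, of `1` plus that of `G[V \ (N[v] ∪ N[w])]`. -/
theorem stmt_7 {V : Type*} [Fintype V] (G : SimpleGraph V) (v : V) :
    maxIM G =
      max (maxIM (G.induce {u : V | u ≠ v}))
        (sSup {k : ℕ | ∃ w : V, G.Adj v w ∧
          k = 1 + maxIM (G.induce
            ((insert v (G.neighborSet v) ∪ insert w (G.neighborSet w))ᶜ))}) := by
  classical
  set branch := fun w => 1 + maxIM (G.induce
    ((insert v (G.neighborSet v) ∪ insert w (G.neighborSet w))ᶜ))
  have hbdd : BddAbove {k : ℕ | ∃ w : V, G.Adj v w ∧ k = branch w} :=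
    (Set.finite_range branch).bddAbove.mono <| by
      rintro _ ⟨w, -, rfl⟩
      exact ⟨w, rfl⟩
  refine le_antisymm ?_ <| max_le (maxIM_induce_le G _) <| csSup_le' <| by
    rintro _ ⟨w, hvw, rfl⟩
    exact one_add_maxIM_induce_le hvw
  obtain ⟨M, hM, hcard⟩ := exists_isInducedMatching_card_eq_maxIM G
  rw [← hcard]
  by_cases hv : ∃ w, s(v, w) ∈ M
  · obtain ⟨w, hvw⟩ := hv
    calc M.card ≤ branch w := hM.card_le_one_add_maxIM_induce hvw
      _ ≤ _ := le_csSup hbdd ⟨w, hM.1 hvw, rfl⟩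
      _ ≤ _ := le_max_right _ _
  · refine le_max_of_le_left (hM.card_le_maxIM_induce fun e he => ?_)
    rw [Set.mem_sym2_iff_subset]
    rintro x hx rfl
    obtain ⟨w, rfl⟩ := Sym2.mem_iff_exists.mp hx
    exact hv ⟨w, he⟩
end

section
/- Measure decrease upon vertex removal: let G have maximum degree 3 with the weight function assigning 1 to degree-3 vertices, s to degree-2 vertices (1/2 ≤ s ≤ 1), and 0 to vertices of degree ≤ 1. If v is a vertex of degree d(v), then removing v from G decreases the total measure μ by at least w(v) plus (1−s) for each degree-3 neighbour of v plus s for each degree-2 neighbour of v. -/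
/-!
Deleting `v` lowers the degree of each neighbour of `v` by one and leaves every other degree
unchanged. With degrees at most 3, a neighbour of degree 3 drops from weight `1` to `s`, one of
degree 2 from `s` to `0`, and one of degree 1 stays at `0`; so the claimed bound is attained with
equality.
-/

open SimpleGraph

/-- The measure-and-conquer weight of a vertex: `1` for degree 3, `s` for degree 2,
`0` for degree at most 1. -/
noncomputable def vertexWeight {V : Type*} (G : SimpleGraph V) (s : ℝ) (v : V) : ℝ :=
  if Nat.card (G.neighborSet v) = 3 then 1
  else if Nat.card (G.neighborSet v) = 2 then s else 0

/-- The measure `μ(G)`: the sum over all vertices of their weights. -/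
noncomputable def graphMeasure {V : Type*} [Fintype V] (G : SimpleGraph V) (s : ℝ) : ℝ :=
  ∑ v : V, vertexWeight G s v

namespace SimpleGraph

variable {V : Type*}

theorem card_neighborSet_induce (G : SimpleGraph V) (S : Set V) (x : S) :
    Nat.card ((G.induce S).neighborSet x) = (G.neighborSet x ∩ S).ncard := by
  rw [← Nat.card_coe_set_eq]
  exact Nat.card_congr <| (Equiv.subtypeSubtypeEquivSubtypeInter (· ∈ S) (G.Adj x)).trans
    (Equiv.subtypeEquivRight fun _ => and_comm)

variable {G : SimpleGraph V} {v : V} (x : {u | u ≠ v})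

theorem neighborSet_inter_ne : G.neighborSet x ∩ {u | u ≠ v} = G.neighborSet x \ {v} := by
  ext
  simp [and_comm]

theorem card_neighborSet_induce_ne_of_adj [Finite V] (hadj : G.Adj v x) :
    Nat.card ((G.induce {u | u ≠ v}).neighborSet x) = Nat.card (G.neighborSet x) - 1 := by
  rw [card_neighborSet_induce, neighborSet_inter_ne, Nat.card_coe_set_eq]
  exact Set.ncard_sdiff_singleton_of_mem hadj.symm

theorem card_neighborSet_induce_ne_of_not_adj (hadj : ¬ G.Adj v x) :
    Nat.card ((G.induce {u | u ≠ v}).neighborSet x) = Nat.card (G.neighborSet x) := by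
  rw [card_neighborSet_induce, neighborSet_inter_ne,
    Set.sdiff_singleton_eq_self (fun h => hadj h.symm), Nat.card_coe_set_eq]

end SimpleGraph

theorem Fintype.sum_subtype_ne_ite {α R : Type*} [Fintype α] [DecidableEq α] [NonAssocSemiring R]
    {P : α → Prop} [DecidablePred P] {a : α} (ha : ¬ P a) (c : R) :
    ∑ x : {u | u ≠ a}, (if P x then c else 0) = c * Nat.card {u | P u} := by
  have hsplit := Fintype.sum_eq_add_sum_subtype_ne (fun u => if P u then c else 0) a
  rw [if_neg ha, zero_add, Finset.sum_ite, Finset.sum_const_zero, add_zero, Finset.sum_const,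
    nsmul_eq_mul'] at hsplit
  rw [Nat.card_eq_fintype_card, Fintype.card_subtype]
  exact hsplit.symm

open Classical in
theorem vertexWeight_induce_ne_add {V : Type*} [Finite V] (G : SimpleGraph V) (s : ℝ) {v : V}
    (x : {u | u ≠ v}) (hx : Nat.card (G.neighborSet x) ≤ 3) :
    vertexWeight (G.induce {u | u ≠ v}) s x
      + (if G.Adj v x ∧ Nat.card (G.neighborSet x) = 3 then 1 - s else 0)
      + (if G.Adj v x ∧ Nat.card (G.neighborSet x) = 2 then s else 0)
      = vertexWeight G s x := by
  by_cases hadj : G.Adj v x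
  · simp only [vertexWeight, card_neighborSet_induce_ne_of_adj x hadj, hadj, true_and]
    generalize Nat.card (G.neighborSet x) = k at hx ⊢
    interval_cases k <;> norm_num
  · simp only [vertexWeight, card_neighborSet_induce_ne_of_not_adj x hadj, hadj, false_and,
      if_false, add_zero]

theorem graphMeasure_eq_add_sum_ne {V : Type*} [Fintype V] [DecidableEq V] (G : SimpleGraph V)
    (s : ℝ) (v : V) :
    graphMeasure G s = vertexWeight G s v + ∑ x : {u | u ≠ v}, vertexWeight G s x :=
  Fintype.sum_eq_add_sum_subtype_ne _ v

theorem graphMeasure_induce_ne_add {V : Type*} [Fintype V] [DecidableEq V] (G : SimpleGraph V)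
    (s : ℝ) (hdeg : ∀ u : V, Nat.card (G.neighborSet u) ≤ 3) (v : V) :
    graphMeasure (G.induce {u : V | u ≠ v}) s
      + vertexWeight G s v
      + (1 - s) * (Nat.card {u : V | G.Adj v u ∧ Nat.card (G.neighborSet u) = 3} : ℝ)
      + s * (Nat.card {u : V | G.Adj v u ∧ Nat.card (G.neighborSet u) = 2} : ℝ)
      = graphMeasure G s := by
  classical
  rw [← Fintype.sum_subtype_ne_ite (a := v) (fun h => G.irrefl h.1),
    ← Fintype.sum_subtype_ne_ite (a := v) (fun h => G.irrefl h.1),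
    graphMeasure_eq_add_sum_ne G s v, graphMeasure,
    ← Finset.sum_congr rfl fun x _ => vertexWeight_induce_ne_add G s x (hdeg x),
    Finset.sum_add_distrib, Finset.sum_add_distrib]
  ring

theorem stmt_13_general {V : Type*} [Fintype V] [DecidableEq V] (G : SimpleGraph V) (s : ℝ)
    (hdeg : ∀ u : V, Nat.card (G.neighborSet u) ≤ 3) (v : V) :
    graphMeasure (G.induce {u : V | u ≠ v}) s
      + vertexWeight G s v
      + (1 - s) * (Nat.card {u : V | G.Adj v u ∧ Nat.card (G.neighborSet u) = 3} : ℝ)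
      + s * (Nat.card {u : V | G.Adj v u ∧ Nat.card (G.neighborSet u) = 2} : ℝ)
      ≤ graphMeasure G s :=
  (graphMeasure_induce_ne_add G s hdeg v).le

/-- measure decrease upon vertex removal: removing a vertex `v` from a
graph of maximum degree 3 decreases the measure by at least `w(v)` plus `1−s` for each
degree-3 neighbour and `s` for each degree-2 neighbour of `v`. -/
theorem stmt_13 {V : Type*} [Fintype V] [DecidableEq V] (G : SimpleGraph V) (s : ℝ)
    (hs1 : 1 / 2 ≤ s) (hs2 : s ≤ 1)
    (hdeg : ∀ u : V, Nat.card (G.neighborSet u) ≤ 3) (v : V) :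
    graphMeasure (G.induce {u : V | u ≠ v}) s
      + vertexWeight G s v
      + (1 - s) * (Nat.card {u : V | G.Adj v u ∧ Nat.card (G.neighborSet u) = 3} : ℝ)
      + s * (Nat.card {u : V | G.Adj v u ∧ Nat.card (G.neighborSet u) = 2} : ℝ)
      ≤ graphMeasure G s :=
  stmt_13_general G s hdeg v
end
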